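/- arXiv:2206.05673 — 4 statements merged into one kernel-verified Lean document; each statement's English description precedes it below -/
import Mathlib

section
/- Let I ⊆ ℝ be an open interval, let β, γ : I → ℝ be functions, let δ be a real constant, and let x, y, z : ℝ → ℝ be three times differentiable functions each of which satisfies the linear ODE u'''(t) + β(t)·u''(t) + γ(t)·u'(t) + δ·u(t) = 0 for all t ∈ I. Then for all t ∈ I, the Wronskian of the first derivatives satisfies W(x',y',z')(t) = -δ · W(x,y,z)(t). -/
/-- The Wronskian of three functions `x, y, z : ℝ → ℝ`: the determinant of the
3×3 matrix whose rows are the functions, their first derivatives, and their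
second derivatives. -/
noncomputable def W3 (x y z : ℝ → ℝ) (t : ℝ) : ℝ :=
  Matrix.det !![x t, y t, z t;
    deriv x t, deriv y t, deriv z t;
    deriv (deriv x) t, deriv (deriv y) t, deriv (deriv z) t]

/-- A function `f : ℝ → ℝ` is three times differentiable. -/
def ThriceDiff (f : ℝ → ℝ) : Prop :=
  Differentiable ℝ f ∧ Differentiable ℝ (deriv f) ∧ Differentiable ℝ (deriv (deriv f))

/-- Expanding the last row of `det ![v, w, s]` along `s = -(b • w + c • v + d • u)`, the terms in
`w` and `v` repeat a row and vanish, and `![v, w, u]` is a cyclic permutation of `![u, v, w]`. -/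
theorem Matrix.det_of_last_row_linear_relation {R : Type*} [CommRing R] (u v w s : Fin 3 → R)
    (b c d : R) (h : s + b • w + c • v + d • u = 0) :
    Matrix.det (Matrix.of ![v, w, s]) = -d * Matrix.det (Matrix.of ![u, v, w]) := by
  have hs : s = -(b • w + c • v + d • u) := by
    rw [← sub_eq_zero, sub_neg_eq_add, ← h]; abel
  subst hs
  simp only [Matrix.det_fin_three, Matrix.of_apply, Matrix.cons_val, Pi.neg_apply, Pi.add_apply,
    Pi.smul_apply, smul_eq_mul]
  ring

theorem stmt_0_general (I : Set ℝ)
    (β γ : ℝ → ℝ) (δ : ℝ) (x y z : ℝ → ℝ)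
    (hxode : ∀ t ∈ I, deriv (deriv (deriv x)) t + β t * deriv (deriv x) t
      + γ t * deriv x t + δ * x t = 0)
    (hyode : ∀ t ∈ I, deriv (deriv (deriv y)) t + β t * deriv (deriv y) t
      + γ t * deriv y t + δ * y t = 0)
    (hzode : ∀ t ∈ I, deriv (deriv (deriv z)) t + β t * deriv (deriv z) t
      + γ t * deriv z t + δ * z t = 0) :
    ∀ t ∈ I, W3 (deriv x) (deriv y) (deriv z) t = -δ * W3 x y z t := by
  intro t ht
  apply Matrix.det_of_last_row_linear_relation _ _ _ _ (β t) (γ t) δ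
  ext i
  fin_cases i
  · simpa using hxode t ht
  · simpa using hyode t ht
  · simpa using hzode t ht

theorem stmt_0 (I : Set ℝ) (hIopen : IsOpen I) (hIinterval : I.OrdConnected)
    (β γ : ℝ → ℝ) (δ : ℝ) (x y z : ℝ → ℝ)
    (hx : ThriceDiff x) (hy : ThriceDiff y) (hz : ThriceDiff z)
    (hxode : ∀ t ∈ I, deriv (deriv (deriv x)) t + β t * deriv (deriv x) t
      + γ t * deriv x t + δ * x t = 0)
    (hyode : ∀ t ∈ I, deriv (deriv (deriv y)) t + β t * deriv (deriv y) t
      + γ t * deriv y t + δ * y t = 0)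
    (hzode : ∀ t ∈ I, deriv (deriv (deriv z)) t + β t * deriv (deriv z) t
      + γ t * deriv z t + δ * z t = 0) :
    ∀ t ∈ I, W3 (deriv x) (deriv y) (deriv z) t = -δ * W3 x y z t :=
  stmt_0_general I β γ δ x y z hxode hyode hzode
end

section
/- (Theorem 2.1) Let I ⊆ ℝ be an open interval, let γ : I → ℝ be a function, let δ be a nonzero real constant, let F : ℝ × ℝ → ℝ be a function, and let x, y, z : ℝ → ℝ be three times differentiable functions each of which satisfies u'''(t) + γ(t)·u'(t) + δ·u(t) = 0 for all t ∈ I, with W(x,y,z)(t) ≠ 0 for all t ∈ I. Fix t₀ ∈ I and let C₀ = W(x,y,z)(t₀). If F(C₀, -δ·C₀) = 0, then F(W(x,y,z)(t), W(x',y',z')(t)) = 0 for all t ∈ I. -/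
/-
Differentiating the determinant row by row, only the term with the last row replaced by
`(x''', y''', z''')` survives, and by the equation that row is `-γ (x', y', z') - δ (x, y, z)`,
a combination of the first two rows. Hence `W(x,y,z)` is constant `C₀` on the interval `I`.
The same substitution in the last row of `W(x',y',z')` leaves `-δ (x, y, z)`, so
`W(x',y',z') = -δ W(x,y,z) = -δ C₀` on `I`.
-/

theorem det_fin_three_eq_zero_of_linear_relation {a₀ a₁ a₂ b₀ b₁ b₂ c₀ c₁ c₂ g d : ℝ}
    (ha : a₂ + g * a₁ + d * a₀ = 0) (hb : b₂ + g * b₁ + d * b₀ = 0)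
    (hc : c₂ + g * c₁ + d * c₀ = 0) :
    !![a₀, b₀, c₀; a₁, b₁, c₁; a₂, b₂, c₂].det = 0 := by
  simp only [Matrix.det_fin_three, Fin.isValue, Matrix.of_apply, Matrix.cons_val',
    Matrix.cons_val_zero, Matrix.cons_val_fin_one, Matrix.cons_val_one, Matrix.cons_val]
  linear_combination (b₀ * c₁ - c₀ * b₁) * ha + (c₀ * a₁ - a₀ * c₁) * hb
    + (a₀ * b₁ - b₀ * a₁) * hc

theorem det_fin_three_shift_of_linear_relation {a₀ a₁ a₂ a₃ b₀ b₁ b₂ b₃ c₀ c₁ c₂ c₃ g d : ℝ}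
    (ha : a₃ + g * a₁ + d * a₀ = 0) (hb : b₃ + g * b₁ + d * b₀ = 0)
    (hc : c₃ + g * c₁ + d * c₀ = 0) :
    !![a₁, b₁, c₁; a₂, b₂, c₂; a₃, b₃, c₃].det =
      -d * !![a₀, b₀, c₀; a₁, b₁, c₁; a₂, b₂, c₂].det := by
  simp only [Matrix.det_fin_three, Fin.isValue, Matrix.of_apply, Matrix.cons_val',
    Matrix.cons_val_zero, Matrix.cons_val_fin_one, Matrix.cons_val_one, Matrix.cons_val, neg_mul]
  linear_combination (b₁ * c₂ - c₁ * b₂) * ha + (c₁ * a₂ - a₁ * c₂) * hb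
    + (a₁ * b₂ - b₁ * a₂) * hc

theorem hasDerivAt_W3 {x y z : ℝ → ℝ} (hx : ThriceDiff x) (hy : ThriceDiff y)
    (hz : ThriceDiff z) (t : ℝ) :
    HasDerivAt (W3 x y z)
      !![x t, y t, z t;
        deriv x t, deriv y t, deriv z t;
        deriv (deriv (deriv x)) t, deriv (deriv (deriv y)) t, deriv (deriv (deriv z)) t].det t := by
  obtain ⟨x₀, x₁, x₂⟩ := hx
  obtain ⟨y₀, y₁, y₂⟩ := hy
  obtain ⟨z₀, z₁, z₂⟩ := hz
  unfold W3
  simp only [Matrix.det_fin_three, Fin.isValue, Matrix.of_apply, Matrix.cons_val',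
    Matrix.cons_val_zero, Matrix.cons_val_fin_one, Matrix.cons_val_one, Matrix.cons_val]
  refine (((((((x₀ t).hasDerivAt.mul (y₁ t).hasDerivAt).mul (z₂ t).hasDerivAt).sub
    (((x₀ t).hasDerivAt.mul (z₁ t).hasDerivAt).mul (y₂ t).hasDerivAt)).sub
    (((y₀ t).hasDerivAt.mul (x₁ t).hasDerivAt).mul (z₂ t).hasDerivAt)).add
    (((y₀ t).hasDerivAt.mul (z₁ t).hasDerivAt).mul (x₂ t).hasDerivAt)).add
    (((z₀ t).hasDerivAt.mul (x₁ t).hasDerivAt).mul (y₂ t).hasDerivAt)).sub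
    (((z₀ t).hasDerivAt.mul (y₁ t).hasDerivAt).mul (x₂ t).hasDerivAt) |>.congr_deriv ?_
  simp only [Pi.mul_apply]
  ring

theorem Set.OrdConnected.eq_of_hasDerivAt_zero {f : ℝ → ℝ} {s : Set ℝ} (hs : s.OrdConnected)
    (hf : ∀ t ∈ s, HasDerivAt f 0 t) {a b : ℝ} (ha : a ∈ s) (hb : b ∈ s) : f b = f a := by
  have h := (convex_iff_ordConnected.mpr hs).norm_image_sub_le_of_norm_hasDerivWithin_le
    (fun t ht => (hf t ht).hasDerivWithinAt) (fun _ _ => (norm_zero).le) ha hb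
  rw [zero_mul, norm_le_zero_iff, sub_eq_zero] at h
  exact h

theorem stmt_4_general (I : Set ℝ) (hIinterval : I.OrdConnected)
    (γ : ℝ → ℝ) (δ : ℝ) (F : ℝ × ℝ → ℝ) (x y z : ℝ → ℝ)
    (hx : ThriceDiff x) (hy : ThriceDiff y) (hz : ThriceDiff z)
    (hxode : ∀ t ∈ I, deriv (deriv (deriv x)) t + γ t * deriv x t + δ * x t = 0)
    (hyode : ∀ t ∈ I, deriv (deriv (deriv y)) t + γ t * deriv y t + δ * y t = 0)
    (hzode : ∀ t ∈ I, deriv (deriv (deriv z)) t + γ t * deriv z t + δ * z t = 0)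
    (t₀ : ℝ) (ht₀ : t₀ ∈ I)
    (hF : F (W3 x y z t₀, -δ * W3 x y z t₀) = 0) :
    ∀ t ∈ I, F (W3 x y z t, W3 (deriv x) (deriv y) (deriv z) t) = 0 := by
  have hW_deriv_zero : ∀ t ∈ I, HasDerivAt (W3 x y z) 0 t := fun t ht =>
    (hasDerivAt_W3 hx hy hz t).congr_deriv <|
      det_fin_three_eq_zero_of_linear_relation (hxode t ht) (hyode t ht) (hzode t ht)
  intro t ht
  have hW_deriv : W3 (deriv x) (deriv y) (deriv z) t = -δ * W3 x y z t :=
    det_fin_three_shift_of_linear_relation (hxode t ht) (hyode t ht) (hzode t ht)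
  rw [hW_deriv, hIinterval.eq_of_hasDerivAt_zero hW_deriv_zero ht₀ ht, hF]

theorem stmt_4 (I : Set ℝ) (hIopen : IsOpen I) (hIinterval : I.OrdConnected)
    (γ : ℝ → ℝ) (δ : ℝ) (hδ : δ ≠ 0) (F : ℝ × ℝ → ℝ) (x y z : ℝ → ℝ)
    (hx : ThriceDiff x) (hy : ThriceDiff y) (hz : ThriceDiff z)
    (hxode : ∀ t ∈ I, deriv (deriv (deriv x)) t + γ t * deriv x t + δ * x t = 0)
    (hyode : ∀ t ∈ I, deriv (deriv (deriv y)) t + γ t * deriv y t + δ * y t = 0)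
    (hzode : ∀ t ∈ I, deriv (deriv (deriv z)) t + γ t * deriv z t + δ * z t = 0)
    (hne : ∀ t ∈ I, W3 x y z t ≠ 0)
    (t₀ : ℝ) (ht₀ : t₀ ∈ I)
    (hF : F (W3 x y z t₀, -δ * W3 x y z t₀) = 0) :
    ∀ t ∈ I, F (W3 x y z t, W3 (deriv x) (deriv y) (deriv z) t) = 0 :=
  stmt_4_general I hIinterval γ δ F x y z hx hy hz hxode hyode hzode t₀ ht₀ hF
end

section
/- Let a be a nonzero real number and define x(t) = exp(-a·t), y(t) = exp(a·t/2)·cos(√3·a·t/2), z(t) = exp(a·t/2)·sin(√3·a·t/2) for t ∈ ℝ. Then each of x, y, z satisfies the ODE u'''(t) + a³·u(t) = 0 for all t ∈ ℝ, and the triple (x, y, z) satisfies the Tzitzeica curve equation W(x',y',z')(t) = -(2√3/9) · (W(x,y,z)(t))² for all t ∈ ℝ. -/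
noncomputable def x₇ (a : ℝ) : ℝ → ℝ := fun t => Real.exp (-a * t)
noncomputable def y₇ (a : ℝ) : ℝ → ℝ := fun t =>
  Real.exp (a * t / 2) * Real.cos (Real.sqrt 3 * a * t / 2)
noncomputable def z₇ (a : ℝ) : ℝ → ℝ := fun t =>
  Real.exp (a * t / 2) * Real.sin (Real.sqrt 3 * a * t / 2)

/-!
The curve `f = (x, y, z)` solves the constant-coefficient linear system `f' = f B` with
`B = diag(-a, (a/2) [[1, √3], [-√3, 1]])`, whose three eigenvalues are the cube roots of `-a³`;
hence `B³ = -a³ I`, which is the ODE `u''' + a³ u = 0` for every coordinate. Differentiating the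
Wronskian matrix of `f` multiplies it on the right by `B`, so `W(x', y', z') = det B · W(x, y, z)`
with `det B = -a³`. Finally `x (y² + z²) = 1` makes `W(x, y, z)` the constant `3√3 a³ / 2`, and
`-a³ W = -(2√3 / 9) W²` for this value of `W`.
-/

open Matrix

section LinearSystem

variable {ι : Type*} [Fintype ι] [DecidableEq ι] {f : ι → ℝ → ℝ} {B : Matrix ι ι ℝ}

theorem iterate_deriv_eq_sum_pow (hf : ∀ i t, HasDerivAt (f i) (∑ j, f j t * B j i) t)
    (k : ℕ) (i : ι) (t : ℝ) : deriv^[k] (f i) t = ∑ j, f j t * (B ^ k) j i := by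
  induction k generalizing i t with
  | zero => simp [one_apply]
  | succ k ih =>
    have hk : deriv^[k] (f i) = fun s => ∑ j, f j s * (B ^ k) j i := funext (ih i)
    have hd := HasDerivAt.fun_sum (u := Finset.univ) fun j _ => (hf j t).mul_const ((B ^ k) j i)
    rw [Function.iterate_succ_apply', hk, hd.deriv, pow_succ']
    simp only [mul_apply, Finset.sum_mul, Finset.mul_sum, mul_assoc]
    exact Finset.sum_comm

theorem iterate_deriv_eq_smul_of_pow_eq_smul_one {n : ℕ} {c : ℝ} (hB : B ^ n = c • 1)
    (hf : ∀ i t, HasDerivAt (f i) (∑ j, f j t * B j i) t) (i : ι) (t : ℝ) :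
    deriv^[n] (f i) t = c * f i t := by
  simp [iterate_deriv_eq_sum_pow hf, hB, one_apply, mul_comm]

end LinearSystem

noncomputable def wronskianMatrix {n : ℕ} (f : Fin n → ℝ → ℝ) (t : ℝ) : Matrix (Fin n) (Fin n) ℝ :=
  of fun k i => deriv^[k] (f i) t

theorem wronskianMatrix_deriv {n : ℕ} {f : Fin n → ℝ → ℝ} {B : Matrix (Fin n) (Fin n) ℝ}
    (hf : ∀ i t, HasDerivAt (f i) (∑ j, f j t * B j i) t) (t : ℝ) :
    wronskianMatrix (fun i => deriv (f i)) t = wronskianMatrix f t * B := by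
  ext k i
  simp only [wronskianMatrix, of_apply, mul_apply, ← Function.iterate_succ_apply,
    iterate_deriv_eq_sum_pow hf, pow_succ, Finset.sum_mul, Finset.mul_sum, mul_assoc]
  exact Finset.sum_comm

theorem W3_eq_det_wronskianMatrix (x y z : ℝ → ℝ) (t : ℝ) :
    W3 x y z t = (wronskianMatrix ![x, y, z] t).det := by
  rw [W3]
  congr 1
  ext k i
  fin_cases k <;> fin_cases i <;> rfl

theorem W3_deriv_eq_mul_det {x y z : ℝ → ℝ} {B : Matrix (Fin 3) (Fin 3) ℝ}
    (hf : ∀ i t, HasDerivAt (![x, y, z] i) (∑ j, ![x, y, z] j t * B j i) t) (t : ℝ) :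
    W3 (deriv x) (deriv y) (deriv z) t = W3 x y z t * B.det := by
  have hderiv : ![deriv x, deriv y, deriv z] = fun i => deriv (![x, y, z] i) := by
    ext i; fin_cases i <;> rfl
  rw [W3_eq_det_wronskianMatrix, W3_eq_det_wronskianMatrix, hderiv, wronskianMatrix_deriv hf,
    det_mul]

theorem sqrt_three_sq : √3 ^ 2 = 3 :=
  Real.sq_sqrt (by norm_num)

noncomputable def coeffMatrix₇ (a : ℝ) : Matrix (Fin 3) (Fin 3) ℝ :=
  !![-a, 0, 0; 0, a / 2, √3 * a / 2; 0, -(√3 * a / 2), a / 2]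

theorem hasDerivAt_x₇ (a t : ℝ) : HasDerivAt (x₇ a) (-a * x₇ a t) t :=
  (hasDerivAt_const_mul (-a)).exp.congr_deriv (mul_comm _ _)

theorem hasDerivAt_y₇ (a t : ℝ) :
    HasDerivAt (y₇ a) (a / 2 * y₇ a t - √3 * a / 2 * z₇ a t) t := by
  refine (((hasDerivAt_const_mul a).div_const 2).exp.fun_mul
    ((hasDerivAt_const_mul (√3 * a)).div_const 2).cos).congr_deriv ?_
  simp only [y₇, z₇]; ring

theorem hasDerivAt_z₇ (a t : ℝ) :
    HasDerivAt (z₇ a) (√3 * a / 2 * y₇ a t + a / 2 * z₇ a t) t := by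
  refine (((hasDerivAt_const_mul a).div_const 2).exp.fun_mul
    ((hasDerivAt_const_mul (√3 * a)).div_const 2).sin).congr_deriv ?_
  simp only [y₇, z₇]; ring

theorem hasDerivAt_curve₇ (a : ℝ) (i : Fin 3) (t : ℝ) :
    HasDerivAt (![x₇ a, y₇ a, z₇ a] i)
      (∑ j, ![x₇ a, y₇ a, z₇ a] j t * coeffMatrix₇ a j i) t := by
  fin_cases i <;>
    simp only [coeffMatrix₇, Fin.sum_univ_three,
      of_apply, cons_val', cons_val_zero, cons_val_one, cons_val, cons_val_fin_one,
      Fin.isValue, Fin.zero_eta, Fin.mk_one, Fin.reduceFinMk]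
  · convert hasDerivAt_x₇ a t using 1; ring
  · convert hasDerivAt_y₇ a t using 1; ring
  · convert hasDerivAt_z₇ a t using 1; ring

theorem coeffMatrix₇_sq (a : ℝ) : coeffMatrix₇ a ^ 2 =
    !![a ^ 2, 0, 0; 0, -(a ^ 2 / 2), √3 * a ^ 2 / 2; 0, -(√3 * a ^ 2 / 2), -(a ^ 2 / 2)] := by
  ext i j
  fin_cases i <;> fin_cases j <;>
    simp only [sq, coeffMatrix₇, mul_apply, Fin.sum_univ_three,
      of_apply, cons_val', cons_val_zero, cons_val_one, cons_val, cons_val_fin_one,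
      Fin.isValue, Fin.zero_eta, Fin.mk_one, Fin.reduceFinMk] <;>
    ring_nf <;> simp only [sqrt_three_sq] <;> ring

theorem coeffMatrix₇_pow_three (a : ℝ) : coeffMatrix₇ a ^ 3 = (-a ^ 3) • 1 := by
  ext i j
  rw [pow_succ, coeffMatrix₇_sq]
  fin_cases i <;> fin_cases j <;>
    simp only [coeffMatrix₇, mul_apply, Fin.sum_univ_three, Matrix.smul_apply, smul_eq_mul,
      one_fin_three, of_apply, cons_val', cons_val_zero, cons_val_one, cons_val, cons_val_fin_one,
      Fin.isValue, Fin.zero_eta, Fin.mk_one, Fin.reduceFinMk] <;>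
    ring_nf <;> simp only [sqrt_three_sq] <;> ring

theorem det_coeffMatrix₇ (a : ℝ) : (coeffMatrix₇ a).det = -a ^ 3 := by
  rw [coeffMatrix₇, det_fin_three]
  simp only [of_apply, cons_val', cons_val_zero, cons_val_one, cons_val, cons_val_fin_one]
  linear_combination (-(a ^ 3 / 4)) * sqrt_three_sq

theorem x₇_mul_y₇_sq_add_z₇_sq (a t : ℝ) : x₇ a t * (y₇ a t ^ 2 + z₇ a t ^ 2) = 1 := by
  have hexp : Real.exp (-a * t) * Real.exp (a * t / 2) ^ 2 = 1 := by
    rw [sq, ← Real.exp_add, ← Real.exp_add]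
    norm_num
  simp only [x₇, y₇, z₇]
  linear_combination hexp + Real.exp (-a * t) * Real.exp (a * t / 2) ^ 2 *
    Real.cos_sq_add_sin_sq (√3 * a * t / 2)

theorem W3_x₇_y₇_z₇ (a t : ℝ) : W3 (x₇ a) (y₇ a) (z₇ a) t = 3 * √3 / 2 * a ^ 3 := by
  rw [W3_eq_det_wronskianMatrix, det_fin_three]
  simp only [wronskianMatrix, of_apply, Fin.val_zero, Fin.val_one, Fin.val_two,
    iterate_deriv_eq_sum_pow (hasDerivAt_curve₇ a), coeffMatrix₇_sq, pow_one, pow_zero]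
  simp only [one_apply, mul_ite, mul_one, mul_zero, Finset.sum_ite_eq', Finset.mem_univ,
    if_true, coeffMatrix₇, Fin.sum_univ_three,
    of_apply, cons_val', cons_val_zero, cons_val_one, cons_val, cons_val_fin_one]
  linear_combination (3 * √3 / 2 * a ^ 3) * x₇_mul_y₇_sq_add_z₇_sq a t

theorem stmt_7_general (a : ℝ) :
    (∀ t : ℝ, deriv (deriv (deriv (x₇ a))) t + a ^ 3 * x₇ a t = 0) ∧
    (∀ t : ℝ, deriv (deriv (deriv (y₇ a))) t + a ^ 3 * y₇ a t = 0) ∧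
    (∀ t : ℝ, deriv (deriv (deriv (z₇ a))) t + a ^ 3 * z₇ a t = 0) ∧
    (∀ t : ℝ, W3 (deriv (x₇ a)) (deriv (y₇ a)) (deriv (z₇ a)) t
      = -(2 * Real.sqrt 3 / 9) * (W3 (x₇ a) (y₇ a) (z₇ a) t) ^ 2) := by
  have hode (i : Fin 3) (t : ℝ) :
      deriv^[3] (![x₇ a, y₇ a, z₇ a] i) t + a ^ 3 * ![x₇ a, y₇ a, z₇ a] i t = 0 := by
    rw [iterate_deriv_eq_smul_of_pow_eq_smul_one (coeffMatrix₇_pow_three a) (hasDerivAt_curve₇ a)]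
    ring
  refine ⟨hode 0, hode 1, hode 2, fun t => ?_⟩
  rw [W3_deriv_eq_mul_det (hasDerivAt_curve₇ a), det_coeffMatrix₇, W3_x₇_y₇_z₇]
  linear_combination (√3 / 2 * a ^ 6) * sqrt_three_sq

theorem stmt_7 (a : ℝ) (ha : a ≠ 0) :
    (∀ t : ℝ, deriv (deriv (deriv (x₇ a))) t + a ^ 3 * x₇ a t = 0) ∧
    (∀ t : ℝ, deriv (deriv (deriv (y₇ a))) t + a ^ 3 * y₇ a t = 0) ∧
    (∀ t : ℝ, deriv (deriv (deriv (z₇ a))) t + a ^ 3 * z₇ a t = 0) ∧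
    (∀ t : ℝ, W3 (deriv (x₇ a)) (deriv (y₇ a)) (deriv (z₇ a)) t
      = -(2 * Real.sqrt 3 / 9) * (W3 (x₇ a) (y₇ a) (z₇ a) t) ^ 2) :=
  stmt_7_general a
end

section
/- Let v₁, v₂ be nonzero real numbers with v₂ ≠ v₁, v₂ ≠ -2v₁, and v₂ ≠ -v₁/2, and define x(t) = exp(v₁·t), y(t) = exp(v₂·t), z(t) = exp(-(v₁+v₂)·t) for t ∈ ℝ. Then the triple (x, y, z) satisfies the Tzitzeica curve equation W(x',y',z')(t) = α · (W(x,y,z)(t))² for all t ∈ ℝ, with α = -v₁v₂(v₁+v₂) / ((v₂-v₁)(2v₁+v₂)(v₁+2v₂)). -/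
noncomputable def x₉ (v₁ : ℝ) : ℝ → ℝ := fun t => Real.exp (v₁ * t)
noncomputable def y₉ (v₂ : ℝ) : ℝ → ℝ := fun t => Real.exp (v₂ * t)
noncomputable def z₉ (v₁ v₂ : ℝ) : ℝ → ℝ := fun t => Real.exp (-(v₁ + v₂) * t)

/-! The Wronskian of `e^{at}, e^{bt}, e^{ct}` is the Vandermonde determinant of `a, b, c` times
`e^{(a+b+c)t}`, and differentiating multiplies it by `abc`. When `a + b + c = 0` the exponential
factor is `1`, so `W(x',y',z') = abc·V = (abc/V)·V²` with `V = (b-a)(c-a)(c-b)`; for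
`a = v₁, b = v₂, c = -(v₁+v₂)` this is the claimed constant. -/

open Real

lemma deriv_const_mul_exp_mul (p a : ℝ) :
    deriv (fun t => p * exp (a * t)) = fun t => p * a * exp (a * t) := by
  funext t
  have h := (((hasDerivAt_id t).const_mul a).exp.const_mul p).deriv
  simp only [id, mul_one] at h
  rw [h]; ring

lemma W3_const_mul_exp_mul (p q r a b c t : ℝ) :
    W3 (fun s => p * exp (a * s)) (fun s => q * exp (b * s)) (fun s => r * exp (c * s)) t
      = p * q * r * ((b - a) * (c - a) * (c - b)) * exp ((a + b + c) * t) := by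
  simp only [W3, deriv_const_mul_exp_mul, Matrix.det_fin_three, Matrix.of_apply,
    Matrix.cons_val', Matrix.cons_val_zero, Matrix.cons_val_one, Matrix.cons_val_two,
    Matrix.empty_val', Matrix.cons_val_fin_one, Matrix.tail_cons, Matrix.vecHead]
  rw [add_mul, add_mul, exp_add, exp_add]
  ring

lemma W3_exp_mul (a b c t : ℝ) :
    W3 (fun s => exp (a * s)) (fun s => exp (b * s)) (fun s => exp (c * s)) t
      = (b - a) * (c - a) * (c - b) * exp ((a + b + c) * t) := by
  simpa using W3_const_mul_exp_mul 1 1 1 a b c t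

lemma deriv_exp_mul (a : ℝ) : deriv (fun t => exp (a * t)) = fun t => a * exp (a * t) := by
  simpa using deriv_const_mul_exp_mul 1 a

theorem stmt_9_general (v₁ v₂ : ℝ)
    (h₁ : v₂ ≠ v₁) (h₂ : v₂ ≠ -2 * v₁) (h₃ : v₂ ≠ -v₁ / 2) :
    ∀ t : ℝ, W3 (deriv (x₉ v₁)) (deriv (y₉ v₂)) (deriv (z₉ v₁ v₂)) t
      = (-(v₁ * v₂ * (v₁ + v₂)) / ((v₂ - v₁) * (2 * v₁ + v₂) * (v₁ + 2 * v₂)))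
        * (W3 (x₉ v₁) (y₉ v₂) (z₉ v₁ v₂) t) ^ 2 := by
  intro t
  have hV : (v₂ - v₁) * (2 * v₁ + v₂) * (v₁ + 2 * v₂) ≠ 0 := by
    refine mul_ne_zero (mul_ne_zero (sub_ne_zero.mpr h₁) ?_) ?_
    · contrapose! h₂; linarith
    · contrapose! h₃; linarith
  unfold x₉ y₉ z₉
  simp only [deriv_exp_mul]
  rw [W3_const_mul_exp_mul, W3_exp_mul, show v₁ + v₂ + -(v₁ + v₂) = 0 by ring,
    zero_mul, exp_zero,
    show (v₂ - v₁) * (-(v₁ + v₂) - v₁) * (-(v₁ + v₂) - v₂)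
      = (v₂ - v₁) * (2 * v₁ + v₂) * (v₁ + 2 * v₂) by ring]
  field_simp

theorem stmt_9 (v₁ v₂ : ℝ) (hv₁ : v₁ ≠ 0) (hv₂ : v₂ ≠ 0)
    (h₁ : v₂ ≠ v₁) (h₂ : v₂ ≠ -2 * v₁) (h₃ : v₂ ≠ -v₁ / 2) :
    ∀ t : ℝ, W3 (deriv (x₉ v₁)) (deriv (y₉ v₂)) (deriv (z₉ v₁ v₂)) t
      = (-(v₁ * v₂ * (v₁ + v₂)) / ((v₂ - v₁) * (2 * v₁ + v₂) * (v₁ + 2 * v₂)))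
        * (W3 (x₉ v₁) (y₉ v₂) (z₉ v₁ v₂) t) ^ 2 :=
  stmt_9_general v₁ v₂ h₁ h₂ h₃
end
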